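/- The function f(s) := 2(2^{s−2} − 1)·ζ(s−2) − (1/2)(2^{s} − 1)·ζ(s) (the meromorphic continuation of the spectral zeta function ζ_D of the Dirac operator of SU_q(2)) is holomorphic on ℂ ∖ {1, 3}, has simple poles at s = 3 and s = 1 with residues 2 and −1/2 respectively, and satisfies f(0) = 0. -/
import Mathlib

noncomputable section

open Filter Topology Complex

lemma cpow_cont : Continuous (fun s : ℂ => (2 : ℂ) ^ s) := by
  apply continuous_const.cpow continuous_id
  intro a
  exact Or.inl (by norm_num)

lemma shift_tendsto : Tendsto (fun s : ℂ => s - 2) (𝓝[≠] 3) (𝓝[≠] 1) := by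
  apply tendsto_nhdsWithin_of_tendsto_nhds_of_eventually_within
  · have : Tendsto (fun s : ℂ => s - 2) (𝓝 3) (𝓝 (3 - 2)) :=
      (continuous_id.sub continuous_const).tendsto 3
    rw [show (3 : ℂ) - 2 = 1 by norm_num] at this
    exact this.mono_left nhdsWithin_le_nhds
  · filter_upwards [self_mem_nhdsWithin] with s hs
    simp only [Set.mem_compl_iff, Set.mem_singleton_iff] at hs ⊢
    intro h
    apply hs
    linear_combination h

/-- The meromorphic continuation of the spectral zeta function of the Dirac operator of
`SU_q(2)`: `f(s) = 2(2^(s-2) - 1)ζ(s-2) - (1/2)(2^s - 1)ζ(s)`. -/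
def suq2Zeta (s : ℂ) : ℂ :=
  2 * ((2 : ℂ) ^ (s - 2) - 1) * riemannZeta (s - 2)
    - (1 / 2) * ((2 : ℂ) ^ s - 1) * riemannZeta s

/-- `suq2Zeta` is holomorphic on `ℂ \ {1, 3}`, has simple poles at `3` and
`1` with residues `2` and `-1/2` respectively, and vanishes at `0`. -/
theorem suq2Zeta_properties :
    DifferentiableOn ℂ suq2Zeta (({1, 3} : Set ℂ)ᶜ) ∧
    Filter.Tendsto (fun s : ℂ => (s - 3) * suq2Zeta s) (nhdsWithin 3 {(3 : ℂ)}ᶜ)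
      (nhds 2) ∧
    Filter.Tendsto (fun s : ℂ => (s - 1) * suq2Zeta s) (nhdsWithin 1 {(1 : ℂ)}ᶜ)
      (nhds (-1 / 2)) ∧
    suq2Zeta 0 = 0 := by
  refine ⟨?_, ?_, ?_, ?_⟩
  · intro s hs
    simp only [Set.mem_compl_iff, Set.mem_insert_iff, Set.mem_singleton_iff, not_or] at hs
    obtain ⟨h1, h3⟩ := hs
    have hd : DifferentiableAt ℂ suq2Zeta s := by
      have hz2 : DifferentiableAt ℂ (fun s : ℂ => riemannZeta (s - 2)) s := by
        have := (differentiableAt_riemannZeta (s := s - 2) (by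
          intro h; apply h3; linear_combination h)).comp s
          (differentiableAt_id.sub_const 2)
        exact this
      have hz : DifferentiableAt ℂ riemannZeta s := differentiableAt_riemannZeta h1
      have hp2 : DifferentiableAt ℂ (fun s : ℂ => (2 : ℂ) ^ (s - 2)) s :=
        (differentiableAt_id.sub_const 2).const_cpow (Or.inl two_ne_zero)
      have hp : DifferentiableAt ℂ (fun s : ℂ => (2 : ℂ) ^ s) s :=
        differentiableAt_id.const_cpow (Or.inl two_ne_zero)
      exact (((differentiableAt_const _).mul (hp2.sub_const 1)).mul hz2).sub
        (((differentiableAt_const _).mul (hp.sub_const 1)).mul hz)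
    exact hd.differentiableWithinAt
  · -- residue at 3
    have hres : Tendsto (fun s : ℂ => (s - 2 - 1) * riemannZeta (s - 2)) (𝓝[≠] 3) (𝓝 1) :=
      riemannZeta_residue_one.comp shift_tendsto
    have hc1 : Tendsto (fun s : ℂ => 2 * ((2 : ℂ) ^ (s - 2) - 1)) (𝓝[≠] 3)
        (𝓝 (2 * ((2:ℂ) ^ ((3:ℂ) - 2) - 1))) :=
      ((continuous_const.mul ((cpow_cont.comp (continuous_id.sub continuous_const)).sub
        continuous_const)).tendsto 3).mono_left nhdsWithin_le_nhds
    have hc2 : Tendsto (fun s : ℂ => (s - 3) * ((1/2 : ℂ) * ((2:ℂ) ^ s - 1) * riemannZeta s))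
        (𝓝[≠] 3) (𝓝 (((3:ℂ) - 3) * ((1/2 : ℂ) * ((2:ℂ) ^ (3:ℂ) - 1) * riemannZeta 3))) := by
      have hzc : ContinuousAt riemannZeta 3 :=
        (differentiableAt_riemannZeta (by norm_num)).continuousAt
      exact (((continuous_id.sub continuous_const).continuousAt).mul
        (((continuous_const.mul (cpow_cont.sub continuous_const)).continuousAt).mul hzc)
        ).tendsto.mono_left nhdsWithin_le_nhds
    have key := (hc1.mul hres).sub hc2
    have heq : (2 * ((2:ℂ) ^ ((3:ℂ) - 2) - 1)) * 1
        - ((3:ℂ) - 3) * ((1/2 : ℂ) * ((2:ℂ) ^ (3:ℂ) - 1) * riemannZeta 3) = 2 := by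
      rw [show (3:ℂ) - 2 = 1 by norm_num, cpow_one]
      ring
    rw [heq] at key
    refine key.congr' ?_
    filter_upwards [self_mem_nhdsWithin] with s hs
    simp only [suq2Zeta]
    ring
  · -- residue at 1
    have hres : Tendsto (fun s : ℂ => (s - 1) * riemannZeta s) (𝓝[≠] 1) (𝓝 1) :=
      riemannZeta_residue_one
    have hc1 : Tendsto (fun s : ℂ => -((1/2 : ℂ) * ((2:ℂ) ^ s - 1)))
        (𝓝[≠] 1) (𝓝 (-((1/2 : ℂ) * ((2:ℂ) ^ (1:ℂ) - 1)))) :=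
      ((continuous_const.mul (cpow_cont.sub continuous_const)).neg.tendsto 1).mono_left
        nhdsWithin_le_nhds
    have hc2 : Tendsto (fun s : ℂ => (s - 1) * (2 * ((2:ℂ) ^ (s - 2) - 1) * riemannZeta (s - 2)))
        (𝓝[≠] 1) (𝓝 (((1:ℂ) - 1) * (2 * ((2:ℂ) ^ ((1:ℂ) - 2) - 1) * riemannZeta ((1:ℂ) - 2)))) := by
      have hzc : ContinuousAt (fun s : ℂ => riemannZeta (s - 2)) 1 :=
        ((differentiableAt_riemannZeta (s := (1:ℂ) - 2) (by norm_num)).comp 1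
          (differentiableAt_id.sub_const 2)).continuousAt
      exact (((continuous_id.sub continuous_const).continuousAt).mul
        (((continuous_const.mul ((cpow_cont.comp (continuous_id.sub continuous_const)).sub
          continuous_const)).continuousAt).mul hzc)).tendsto.mono_left nhdsWithin_le_nhds
    have key := hc2.add (hc1.mul hres)
    have heq : ((1:ℂ) - 1) * (2 * ((2:ℂ) ^ ((1:ℂ) - 2) - 1) * riemannZeta ((1:ℂ) - 2))
        + (-((1/2 : ℂ) * ((2:ℂ) ^ (1:ℂ) - 1))) * 1 = -1/2 := by
      rw [cpow_one]; ring
    rw [heq] at key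
    refine key.congr' ?_
    filter_upwards [self_mem_nhdsWithin] with s hs
    simp only [suq2Zeta]
    ring
  · -- value at 0
    have h2 : riemannZeta (-2 : ℂ) = 0 := by
      have := riemannZeta_neg_two_mul_nat_add_one 0
      norm_num at this
      exact this
    simp only [suq2Zeta, zero_sub, cpow_zero, h2, mul_zero, sub_self, sub_zero, zero_mul,
      mul_zero]
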